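/- arXiv:2104.04714 — 4 statements merged into one kernel-verified Lean document; each statement's English description precedes it below -/
import Mathlib

section
/- The function f₂(x) = (1 + log x − x) log(1−x) + x log x satisfies f₂(x) ≤ 0 for all x ∈ (0,1) and lim_{x→0⁺} f₂(x) = 0. -/
/-!
With `t - 1 ≤ t log t` (for `t > 0`) applied at `t = x` and at `t = 1 - x`,
`(1 + log x - x) log (1 - x) ≤ (1 - x) log x · log (1 - x) ≤ -x log x`, so `f₂ ≤ 0`.
Both factors of the first product are nonpositive, so `x log x ≤ f₂ ≤ 0`, and the limit
follows by squeezing, since `x log x → 0`.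
-/

open Real Set Filter Topology

noncomputable def f₂ (x : ℝ) : ℝ := (1 + log x - x) * log (1 - x) + x * log x

lemma mul_log_le_f₂ {x : ℝ} (hx : x ∈ Ioo 0 1) : x * log x ≤ f₂ x := by
  have hlog : log x ≤ x - 1 := log_le_sub_one_of_pos hx.1
  have hlog₁ : log (1 - x) ≤ 0 := log_nonpos (by linarith [hx.2]) (by linarith [hx.1])
  have : 0 ≤ (1 + log x - x) * log (1 - x) := mul_nonneg_of_nonpos_of_nonpos (by linarith) hlog₁
  unfold f₂
  linarith

lemma f₂_nonpos_of_mem_Ioo {x : ℝ} (hx : x ∈ Ioo 0 1) : f₂ x ≤ 0 := by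
  have hx₁ : x - 1 ≤ x * log x := self_sub_one_le_mul_log hx.1.le
  have h1x : (1 - x) - 1 ≤ (1 - x) * log (1 - x) := self_sub_one_le_mul_log (by linarith [hx.2])
  have hlog : log x ≤ 0 := log_nonpos hx.1.le hx.2.le
  have hlog₁ : log (1 - x) ≤ 0 := log_nonpos (by linarith [hx.2]) (by linarith [hx.1])
  calc f₂ x ≤ (1 - x) * log x * log (1 - x) + x * log x := by
        unfold f₂
        gcongr ?_ + _
        exact mul_le_mul_of_nonpos_right (by linarith) hlog₁
    _ = log x * ((1 - x) * log (1 - x)) + x * log x := by ring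
    _ ≤ log x * (-x) + x * log x := by
        gcongr ?_ + _
        exact mul_le_mul_of_nonpos_left (by linarith) hlog
    _ = 0 := by ring

lemma tendsto_f₂_nhdsGT_zero : Tendsto f₂ (𝓝[>] 0) (𝓝 0) := by
  have hlower : Tendsto (fun x : ℝ ↦ x * log x) (𝓝[>] 0) (𝓝 0) := by
    simpa using continuous_mul_log.continuousWithinAt (s := Ioi 0) (x := 0) |>.tendsto
  have hIoo : ∀ᶠ x in 𝓝[>] (0 : ℝ), x ∈ Ioo 0 1 := Ioo_mem_nhdsGT one_pos
  exact tendsto_of_tendsto_of_tendsto_of_le_of_le' hlower tendsto_const_nhds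
    (hIoo.mono fun _ ↦ mul_log_le_f₂) (hIoo.mono fun _ ↦ f₂_nonpos_of_mem_Ioo)

/-- `f₂(x) = (1 + log x - x) log(1-x) + x log x` is nonpositive on `(0,1)` and tends
to `0` as `x → 0⁺`. -/
theorem f2_nonpos :
    (∀ x ∈ Set.Ioo (0 : ℝ) 1,
      (1 + Real.log x - x) * Real.log (1 - x) + x * Real.log x ≤ 0) ∧
    Filter.Tendsto (fun x : ℝ => (1 + Real.log x - x) * Real.log (1 - x) + x * Real.log x)
      (nhdsWithin 0 (Set.Ioi 0)) (nhds 0) :=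
  ⟨fun _ ↦ f₂_nonpos_of_mem_Ioo, tendsto_f₂_nhdsGT_zero⟩
end

section
/- The function f₁(x) = (x log x)/((1−x) log(1−x)) is nonincreasing on (0,1). -/
/-!
Write `u x = log x / (x - 1)`, the slope of `log` between `1` and `x`. Then
`f₁ x = u x / u (1 - x)`. Concavity of `log` makes `u` antitone, so on `(0,1)` the numerator
decreases while the denominator increases, and both are positive.
-/

open Real Set

theorem AntitoneOn.div_of_monotoneOn {α : Type*} [Preorder α] {f g : α → ℝ} {s : Set α}
    (hf : AntitoneOn f s) (hg : MonotoneOn g s) (hf₀ : ∀ x ∈ s, 0 ≤ f x)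
    (hg₀ : ∀ x ∈ s, 0 < g x) : AntitoneOn (fun x => f x / g x) s :=
  fun _ hx _ hy hxy => div_le_div₀ (hf₀ _ hx) (hf hx hy hxy) (hg₀ _ hx) (hg hx hy hxy)

theorem Real.antitoneOn_slope_log_one : AntitoneOn (slope log 1) (Ioo 0 1) :=
  (strictConcaveOn_log_Ioi.concaveOn.antitoneOn_slope_lt (mem_Ioi.2 one_pos)).mono
    fun _ hx => ⟨hx.1, hx.2⟩

theorem Real.slope_log_one_pos {x : ℝ} (hx₀ : 0 < x) (hx₁ : x ≠ 1) : 0 < slope log 1 x := by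
  rw [slope_def_field, log_one, sub_zero]
  rcases hx₁.lt_or_gt with hx₁ | hx₁
  · exact div_pos_of_neg_of_neg (log_neg hx₀ hx₁) (sub_neg.2 hx₁)
  · exact div_pos (log_pos hx₁) (sub_pos.2 hx₁)

theorem Real.mul_log_div_eq_slope_log_one_div {x : ℝ} (hx₀ : x ≠ 0) (hx₁ : x ≠ 1) :
    x * log x / ((1 - x) * log (1 - x)) = slope log 1 x / slope log 1 (1 - x) := by
  have hx₁' : x - 1 ≠ 0 := sub_ne_zero.2 hx₁
  simp only [slope_def_field, log_one, sub_zero, sub_sub_cancel_left]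
  field_simp
  ring

/-- `f₁(x) = (x log x) / ((1-x) log(1-x))` is nonincreasing on `(0,1)`. -/
theorem f1_antitone :
    AntitoneOn (fun x : ℝ => (x * Real.log x) / ((1 - x) * Real.log (1 - x)))
      (Set.Ioo (0 : ℝ) 1) := by
  have hmaps : MapsTo (fun x : ℝ => 1 - x) (Ioo 0 1) (Ioo 0 1) :=
    fun x hx => ⟨by linarith [hx.2], by linarith [hx.1]⟩
  have hanti : AntitoneOn (fun x : ℝ => 1 - x) (Ioo 0 1) :=
    fun _ _ _ _ hxy => sub_le_sub_left hxy 1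
  refine (antitoneOn_slope_log_one.div_of_monotoneOn
      (antitoneOn_slope_log_one.comp hanti hmaps)
      (fun x hx => (slope_log_one_pos hx.1 hx.2.ne).le)
      (fun x hx => slope_log_one_pos (hmaps hx).1 (hmaps hx).2.ne)).congr
    fun x hx => (mul_log_div_eq_slope_log_one_div hx.1.ne' hx.2.ne).symm
end

section
/- For 0 < p₂ < p₁ < 1, the function f(D) = log(1−p₂^D)/log(1−p₁^D) is strictly decreasing in D on (0,∞). -/
open Real Set

/-!
Write `F_p(D) = log (1 - p ^ D) < 0` and `ψ(t) = t log t / ((1 - t) log (1 - t))`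
(`negMulLogRatio`). Differentiating gives the elasticity `D F_p'(D) / F_p(D) = -ψ(p ^ D)`, so the
logarithmic derivative of `f = F_{p₂} / F_{p₁}` is `(ψ(p₁ ^ D) - ψ(p₂ ^ D)) / D`. As
`p₂ ^ D < p₁ ^ D`, it suffices that `ψ` is strictly decreasing on `(0, 1)`. The sign of `ψ'`
is that of `log t log (1 - t) - H(t)`, `H` the binary entropy, which is negative because
`x log x > x - 1` at both `x = t` and `x = 1 - t`.
-/

theorem strictAntiOn_of_hasDerivAt_neg {s : Set ℝ} (hconv : Convex ℝ s) (hopen : IsOpen s)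
    {f f' : ℝ → ℝ} (hf : ∀ x ∈ s, HasDerivAt f (f' x) x) (hf' : ∀ x ∈ s, f' x < 0) :
    StrictAntiOn f s :=
  strictAntiOn_of_hasDerivWithinAt_neg hconv
    (fun x hx => (hf x hx).continuousAt.continuousWithinAt)
    (by rw [hopen.interior_eq]; exact fun x hx => (hf x hx).hasDerivWithinAt)
    (by rwa [hopen.interior_eq])

theorem HasDerivAt.div_of_eq_mul {F G : ℝ → ℝ} {a b x : ℝ} (hF : HasDerivAt F (F x * a) x)
    (hG : HasDerivAt G (G x * b) x) (hGx : G x ≠ 0) :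
    HasDerivAt (fun y => F y / G y) (F x / G x * (a - b)) x :=
  (hF.div hG hGx).congr_deriv (by field_simp)

namespace Real

theorem negMulLog_pos {t : ℝ} (h0 : 0 < t) (h1 : t < 1) : 0 < negMulLog t :=
  mul_pos_of_neg_of_neg (neg_neg_of_pos h0) (log_neg h0 h1)

theorem log_mul_log_one_sub_lt_binEntropy {t : ℝ} (h0 : 0 < t) (h1 : t < 1) :
    log t * log (1 - t) < binEntropy t := by
  rw [binEntropy_eq_negMulLog_add_negMulLog_one_sub, negMulLog, negMulLog]
  have ht := self_sub_one_lt_mul_log h0.le h1.ne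
  have hs := self_sub_one_lt_mul_log (sub_pos.2 h1).le (by linarith : 1 - t ≠ 1)
  have hlt := log_neg h0 h1
  have hls := log_neg (sub_pos.2 h1) (by linarith)
  -- the two instances of `x log x > x - 1`, weighted by `-log (1 - t)` and `-log t`
  nlinarith [mul_pos (sub_pos.2 ht) (neg_pos.2 hls), mul_pos (sub_pos.2 hs) (neg_pos.2 hlt)]

noncomputable def negMulLogRatio (t : ℝ) : ℝ := negMulLog t / negMulLog (1 - t)

theorem strictAntiOn_negMulLogRatio : StrictAntiOn negMulLogRatio (Ioo 0 1) := by
  refine strictAntiOn_of_hasDerivAt_neg (convex_Ioo 0 1) isOpen_Ioo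
    (f' := fun t => (log t * log (1 - t) - binEntropy t) / negMulLog (1 - t) ^ 2)
    (fun t ⟨h0, h1⟩ => ?_) (fun t ⟨h0, h1⟩ => ?_)
  · have hN : negMulLog (1 - t) ≠ 0 := (negMulLog_pos (sub_pos.2 h1) (by linarith)).ne'
    refine ((hasDerivAt_negMulLog h0.ne').div
      ((hasDerivAt_negMulLog (sub_pos.2 h1).ne').comp_const_sub 1 t) hN).congr_deriv ?_
    rw [binEntropy_eq_negMulLog_add_negMulLog_one_sub]
    simp only [negMulLog]
    ring
  · exact div_neg_of_neg_of_pos (sub_neg.2 (log_mul_log_one_sub_lt_binEntropy h0 h1))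
      (pow_pos (negMulLog_pos (sub_pos.2 h1) (by linarith)) 2)

theorem rpow_mem_Ioo_zero_one {p D : ℝ} (hp0 : 0 < p) (hp1 : p < 1) (hD : 0 < D) :
    p ^ D ∈ Ioo (0 : ℝ) 1 :=
  ⟨rpow_pos_of_pos hp0 D, rpow_lt_one hp0.le hp1 hD⟩

theorem log_one_sub_neg {t : ℝ} (ht : t ∈ Ioo (0 : ℝ) 1) : log (1 - t) < 0 :=
  log_neg (sub_pos.2 ht.2) (by linarith [ht.1])

theorem hasDerivAt_log_one_sub_rpow {p D : ℝ} (hp0 : 0 < p) (hp1 : p < 1) (hD : 0 < D) :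
    HasDerivAt (fun D => log (1 - p ^ D)) (log (1 - p ^ D) * (-negMulLogRatio (p ^ D) / D)) D := by
  have hx := rpow_mem_Ioo_zero_one hp0 hp1 hD
  refine (((hasStrictDerivAt_const_rpow hp0 D).hasDerivAt.const_sub 1).log
    (sub_pos.2 hx.2).ne').congr_deriv ?_
  have hlog := (log_one_sub_neg hx).ne
  have h1x := (sub_pos.2 hx.2).ne'
  simp only [negMulLogRatio, negMulLog, log_rpow hp0]
  field_simp

end Real

/-- For `0 < p₂ < p₁ < 1`, the function `f(D) = log(1 - p₂^D) / log(1 - p₁^D)` is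
strictly decreasing in `D` on `(0, ∞)`. -/
theorem f_strict_anti (p₁ p₂ : ℝ) (h0 : 0 < p₂) (h21 : p₂ < p₁) (h1 : p₁ < 1) :
    StrictAntiOn (fun D : ℝ => Real.log (1 - p₂ ^ D) / Real.log (1 - p₁ ^ D))
      (Set.Ioi (0 : ℝ)) := by
  have hp₁ : 0 < p₁ := h0.trans h21
  have hp₂ : p₂ < 1 := h21.trans h1
  refine strictAntiOn_of_hasDerivAt_neg (convex_Ioi 0) isOpen_Ioi
    (fun D (hD : 0 < D) => (hasDerivAt_log_one_sub_rpow h0 hp₂ hD).div_of_eq_mul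
      (hasDerivAt_log_one_sub_rpow hp₁ h1 hD)
      (log_one_sub_neg (rpow_mem_Ioo_zero_one hp₁ h1 hD)).ne) fun D (hD : 0 < D) => ?_
  have hx := rpow_mem_Ioo_zero_one hp₁ h1 hD
  have hy := rpow_mem_Ioo_zero_one h0 hp₂ hD
  have hratio : negMulLogRatio (p₁ ^ D) < negMulLogRatio (p₂ ^ D) :=
    strictAntiOn_negMulLogRatio hy hx (rpow_lt_rpow h0.le h21 hD)
  exact mul_neg_of_pos_of_neg (div_pos_of_neg_of_neg (log_one_sub_neg hy) (log_one_sub_neg hx))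
    (sub_neg.2 (div_lt_div_of_pos_right (neg_lt_neg hratio) hD))
end

section
/- For 0 < p₂ < p₁ < 1 and η₁ ∈ (0,1), lim_{D→∞} [1 − (1−p₂^D)·η₁^{log(1−p₂^D)/log(1−p₁^D)}] = 0. Consequently, for every η₂ ∈ (0,1) there exists D* ∈ ℕ such that for all D ≥ D*, 1 − (1−p₂^D)^{log(η₁)/log(1−p₁^D) + 1} ≤ η₂. -/
/-!
Write `a = p₂ ^ D` and `b = p₁ ^ D`. Since `a ≤ -log (1 - a) ≤ a / (1 - a)`, the exponent
`log (1 - a) / log (1 - b)` is squeezed between `0` and `(p₂ / p₁) ^ D / (1 - p₂ ^ D) → 0`, so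
`(1 - a) * η₁ ^ (log (1 - a) / log (1 - b)) → 1`. Both `(1 - a) ^ (log η₁ / log (1 - b))` and
`η₁ ^ (log (1 - a) / log (1 - b))` equal `exp (log (1 - a) * log η₁ / log (1 - b))`, which turns the
discrete bound into the limit.
-/

open Real Filter Topology

namespace Real

lemma neg_log_one_sub_le_div {x : ℝ} (hx : x < 1) : -log (1 - x) ≤ x / (1 - x) := by
  have h := one_sub_inv_le_log_of_pos (sub_pos.2 hx)
  have hx' : 1 - x ≠ 0 := (sub_pos.2 hx).ne'
  rw [show 1 - (1 - x)⁻¹ = -(x / (1 - x)) by field_simp; ring] at h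
  linarith

lemma le_neg_log_one_sub {x : ℝ} (hx : x < 1) : x ≤ -log (1 - x) := by
  linarith [log_le_sub_one_of_pos (sub_pos.2 hx)]

lemma log_one_sub_div_log_one_sub_nonneg {a b : ℝ} (ha₀ : 0 ≤ a) (ha₁ : a < 1) (hb₀ : 0 ≤ b)
    (hb₁ : b < 1) : 0 ≤ log (1 - a) / log (1 - b) :=
  div_nonneg_of_nonpos (log_nonpos (by linarith) (by linarith))
    (log_nonpos (by linarith) (by linarith))

lemma log_one_sub_div_log_one_sub_le {a b : ℝ} (ha₀ : 0 ≤ a) (ha₁ : a < 1) (hb₀ : 0 < b)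
    (hb₁ : b < 1) : log (1 - a) / log (1 - b) ≤ a / (1 - a) / b := by
  rw [← neg_div_neg_eq]
  exact div_le_div₀ (div_nonneg ha₀ (sub_pos.2 ha₁).le) (neg_log_one_sub_le_div ha₁) hb₀
    (le_neg_log_one_sub hb₁)

lemma tendsto_log_one_sub_rpow_div_log_one_sub_rpow {p q : ℝ} (hq : 0 ≤ q) (hqp : q < p)
    (hp : p < 1) :
    Tendsto (fun D : ℝ => log (1 - q ^ D) / log (1 - p ^ D)) atTop (𝓝 0) := by
  have hp₀ : 0 < p := hq.trans_lt hqp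
  have hq_pow : Tendsto (fun D : ℝ => q ^ D) atTop (𝓝 0) :=
    tendsto_rpow_atTop_of_base_lt_one q (by linarith) (hqp.trans hp)
  have hratio_pow : Tendsto (fun D : ℝ => (q / p) ^ D) atTop (𝓝 0) :=
    tendsto_rpow_atTop_of_base_lt_one _ (by linarith [div_nonneg hq hp₀.le])
      ((div_lt_one hp₀).2 hqp)
  have hbound : Tendsto (fun D : ℝ => (q / p) ^ D / (1 - q ^ D)) atTop (𝓝 0) := by
    rw [show (0 : ℝ) = 0 / (1 - 0) by norm_num]
    exact hratio_pow.div (tendsto_const_nhds.sub hq_pow) (by norm_num)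
  refine tendsto_of_tendsto_of_tendsto_of_le_of_le' tendsto_const_nhds hbound ?_ ?_ <;>
    filter_upwards [eventually_gt_atTop 0] with D hD
  · exact log_one_sub_div_log_one_sub_nonneg (rpow_nonneg hq D) (rpow_lt_one hq (hqp.trans hp) hD)
      (rpow_nonneg hp₀.le D) (rpow_lt_one hp₀.le hp hD)
  · calc log (1 - q ^ D) / log (1 - p ^ D) ≤ q ^ D / (1 - q ^ D) / p ^ D :=
          log_one_sub_div_log_one_sub_le (rpow_nonneg hq D) (rpow_lt_one hq (hqp.trans hp) hD)
            (rpow_pos_of_pos hp₀ D) (rpow_lt_one hp₀.le hp hD)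
      _ = (q / p) ^ D / (1 - q ^ D) := by
          rw [div_rpow hq hp₀.le, div_right_comm]

lemma rpow_log_div_comm {a b : ℝ} (ha : 0 < a) (hb : 0 < b) (c : ℝ) :
    a ^ (log b / c) = b ^ (log a / c) := by
  rw [rpow_def_of_pos ha, rpow_def_of_pos hb]
  ring_nf

end Real

/-- For `0 < p₂ < p₁ < 1` and `η₁ ∈ (0,1)`,
`1 - (1 - p₂^D) η₁^{log(1-p₂^D)/log(1-p₁^D)} → 0` as `D → ∞`; consequently, for every
`η₂ ∈ (0,1)` there exists `D* ∈ ℕ` such that for all `D ≥ D*`,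
`1 - (1-p₂^D)^{log η₁ / log(1-p₁^D) + 1} ≤ η₂`. -/
theorem infrequent_pattern_bound (p₁ p₂ η₁ : ℝ) (h0 : 0 < p₂) (h21 : p₂ < p₁)
    (h1 : p₁ < 1) (hη₁ : η₁ ∈ Set.Ioo (0 : ℝ) 1) :
    Filter.Tendsto
      (fun D : ℝ =>
        1 - (1 - p₂ ^ D) * η₁ ^ (Real.log (1 - p₂ ^ D) / Real.log (1 - p₁ ^ D)))
      Filter.atTop (nhds 0) ∧
    ∀ η₂ ∈ Set.Ioo (0 : ℝ) 1, ∃ Dstar : ℕ, ∀ D : ℕ, Dstar ≤ D →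
      1 - (1 - p₂ ^ D) ^ (Real.log η₁ / Real.log (1 - p₁ ^ D) + 1) ≤ η₂ := by
  have hsurvive : Tendsto (fun D : ℝ => 1 - p₂ ^ D) atTop (𝓝 1) := by
    simpa using tendsto_const_nhds.sub
      (tendsto_rpow_atTop_of_base_lt_one p₂ (by linarith) (h21.trans h1))
  have hpow : Tendsto (fun D : ℝ => η₁ ^ (log (1 - p₂ ^ D) / log (1 - p₁ ^ D))) atTop (𝓝 1) := by
    simpa using tendsto_const_nhds.rpow (tendsto_log_one_sub_rpow_div_log_one_sub_rpow h0.le h21 h1)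
      (Or.inl hη₁.1.ne')
  have hlim := (tendsto_const_nhds (x := (1 : ℝ))).sub (hsurvive.mul hpow)
  rw [mul_one, sub_self] at hlim
  refine ⟨hlim, fun η₂ hη₂ => eventually_atTop.1 ?_⟩
  filter_upwards [(hlim.comp tendsto_natCast_atTop_atTop).eventually (eventually_le_nhds hη₂.1),
    eventually_gt_atTop 0] with D hD hD₀
  have hsurvive_pos : 0 < 1 - p₂ ^ (D : ℝ) :=
    sub_pos.2 (rpow_lt_one h0.le (h21.trans h1) (Nat.cast_pos.2 hD₀))
  rw [← rpow_natCast, ← rpow_natCast, rpow_add hsurvive_pos, rpow_one, mul_comm,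
    rpow_log_div_comm hsurvive_pos hη₁.1]
  exact hD
end
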